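/- On the set of monic real polynomials P = x^d − (a_{d−1}x^{d−1} + … + a_0) with |a_i|^{d−i} ≤ M for all i (M ≥ 1), each virtual root function ρ_{d,j} is uniformly continuous with modulus of uniform continuity ω(M,ε) = 2M·(ε/(d(d+1)(2d−1)M))^d with respect to the l¹ norm on the coefficients. -/

import Mathlib

/-!
Every virtual root of `c` lies in `towerPoints d c`: it is a root of some normalized derivative of
`monicPoly d c`, or one of the points `±bnd` met along the way. It also depends continuously on `c`,
because `vroot (n + 1) j c` is the unique minimizer of `|P|` on an interval between consecutive
virtual roots of the derivative, on which `P` is strictly monotone. Along the segment from `c` to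
`c'` the virtual root therefore sweeps out the whole interval between its two end values, and this
interval is covered by small balls. If `x` is a root of a polynomial of the tower at a point of the
segment, the corresponding polynomial `Q` of `c` satisfies `|Q x| ≤ δ B ^ (m - 1) < r ^ m`; as
`|Q x|` is the product of the distances from `x` to the `m` complex roots of `Q`, one of them lies
within `r` of `x`. The points `±bnd` move by at most `δ`. The tower has at most `d (d + 1) / 2`
roots and `2 d` such points, so the interval has length at most `d (d + 1) r + 4 d δ`, which is
below `ε` for `r = 2 M ε'` with `ε' = ε / (d (d + 1) (2 d - 1) M)`.
-/

open Polynomial Set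

noncomputable def monicPoly (d : ℕ) (c : Fin d → ℝ) : Polynomial ℝ :=
  X ^ d + ∑ i : Fin d, C (c i) * X ^ (i : ℕ)

noncomputable def dCoeff {d : ℕ} (c : Fin (d + 1) → ℝ) : Fin d → ℝ :=
  fun i => c i.succ * ((i : ℕ) + 1) / (d + 1)

noncomputable def bnd {d : ℕ} (c : Fin d → ℝ) : ℝ := 1 + ⨆ i, |c i|

/-- The point of `[a,b]` where `|P|` attains its minimum. -/
noncomputable def Rmin (a b : ℝ) (P : Polynomial ℝ) : ℝ :=
  if h : a ≤ b then
    (isCompact_Icc.exists_isMinOn (Set.nonempty_Icc.mpr h)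
      ((continuous_abs.comp P.continuous).continuousOn)).choose
  else a

/-- The `j`-th virtual root of the monic polynomial with coefficient vector `c`,
defined inductively as the minimizer of `|P|` between consecutive virtual roots
of `P/d`, infinite endpoints being handled by the Cauchy root bound `bnd`. -/
noncomputable def vroot : (d : ℕ) → ℤ → (Fin d → ℝ) → ℝ
  | 0, _, _ => 0
  | d + 1, j, c =>
    Rmin (if 1 < j then vroot d (j - 1) (dCoeff c) else -(bnd c))
      (if j < (d : ℤ) + 1 then vroot d j (dCoeff c) else bnd c)
      (monicPoly (d + 1) c)

open Filter Topology MeasureTheory Metric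
open scoped NNReal

lemma monicPoly_monic (d : ℕ) (c : Fin d → ℝ) : (monicPoly d c).Monic :=
  monic_X_pow_add (degree_sum_fin_lt c)

lemma natDegree_monicPoly (d : ℕ) (c : Fin d → ℝ) : (monicPoly d c).natDegree = d := by
  rw [monicPoly, natDegree_add_eq_left_of_degree_lt] <;> simp [degree_sum_fin_lt]

lemma eval_monicPoly (d : ℕ) (c : Fin d → ℝ) (x : ℝ) :
    (monicPoly d c).eval x = x ^ d + ∑ i, c i * x ^ (i : ℕ) := by
  simp [monicPoly, eval_finsetSum]

lemma coeff_monicPoly {d i : ℕ} (c : Fin d → ℝ) (hi : i < d) :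
    (monicPoly d c).coeff i = c ⟨i, hi⟩ := by
  simp only [monicPoly, coeff_add, coeff_X_pow, hi.ne, if_false, finsetSum_coeff, coeff_C_mul_X_pow,
    zero_add]
  rw [Finset.sum_eq_single_of_mem ⟨i, hi⟩ (Finset.mem_univ _)
    fun j _ hj => if_neg fun h => hj (Fin.ext h.symm), if_pos rfl]

lemma derivative_monicPoly (d : ℕ) (c : Fin (d + 1) → ℝ) :
    derivative (monicPoly (d + 1) c) = C ((d : ℝ) + 1) * monicPoly d (dCoeff c) := by
  simp only [monicPoly, derivative_add, derivative_X_pow, derivative_sum, derivative_C_mul_X_pow,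
    Fin.sum_univ_succ, mul_add, Finset.mul_sum, dCoeff]
  congr 1
  · simp
  · simp only [Fin.val_zero, CharP.cast_eq_zero, mul_zero, C_0, zero_mul, zero_add, Fin.val_succ,
      add_tsub_cancel_right, ← mul_assoc, ← C_mul]
    refine Finset.sum_congr rfl fun i _ => ?_
    congr 2
    field_simp
    push_cast
    ring

lemma bnd_eq {d : ℕ} (c : Fin d → ℝ) : bnd c = 1 + ‖c‖ := by
  refine congrArg (1 + ·) (le_antisymm ?_ ?_)
  · exact Real.iSup_le (fun i => norm_le_pi_norm c i) (norm_nonneg c)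
  · exact (pi_norm_le_iff_of_nonneg (Real.iSup_nonneg fun i => abs_nonneg (c i))).2
      fun i => le_ciSup (f := fun i => |c i|) (Set.finite_range _).bddAbove i

lemma continuous_bnd {d : ℕ} : Continuous (bnd : (Fin d → ℝ) → ℝ) :=
  (continuous_const.add continuous_norm).congr fun c => (bnd_eq c).symm

lemma abs_lt_bnd_of_isRoot {d : ℕ} {c : Fin d → ℝ} {x : ℝ} (hx : (monicPoly d c).IsRoot x) :
    |x| < bnd c := by
  have hbound : (cauchyBound (monicPoly d c) : ℝ) ≤ bnd c := by
    rw [cauchyBound, natDegree_monicPoly, (monicPoly_monic d c).leadingCoeff, nnnorm_one, div_one,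
      bnd_eq, NNReal.coe_add, NNReal.coe_one, add_comm, ← coe_nnnorm c]
    gcongr
    refine NNReal.coe_le_coe.2 (Finset.sup_le fun i hi => ?_)
    rw [coeff_monicPoly c (Finset.mem_range.1 hi)]
    exact nnnorm_le_pi_nnnorm c _
  have hcauchy := hx.norm_lt_cauchyBound (monicPoly_monic d c).ne_zero
  rw [← NNReal.coe_lt_coe, coe_nnnorm, Real.norm_eq_abs] at hcauchy
  exact hcauchy.trans_le hbound

lemma abs_bnd_sub_bnd_le {d : ℕ} (c c' : Fin d → ℝ) : |bnd c - bnd c'| ≤ ∑ i, |c i - c' i| := by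
  rw [bnd_eq, bnd_eq, add_sub_add_left_eq_sub]
  refine (abs_norm_sub_norm_le c c').trans <|
    (pi_norm_le_iff_of_nonneg (Finset.sum_nonneg fun i _ => abs_nonneg _)).2 fun i => ?_
  exact Finset.single_le_sum (f := fun i => |c i - c' i|) (fun i _ => abs_nonneg _)
    (Finset.mem_univ i)

lemma abs_dCoeff_le {d : ℕ} (c : Fin (d + 1) → ℝ) (i : Fin d) : |dCoeff c i| ≤ |c i.succ| := by
  have hi : (i : ℝ) + 1 ≤ d + 1 := by exact_mod_cast Nat.succ_le_succ i.2.le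
  rw [dCoeff, mul_div_assoc, abs_mul, abs_of_nonneg (by positivity : (0 : ℝ) ≤ (i + 1) / (d + 1))]
  exact mul_le_of_le_one_right (abs_nonneg _) ((div_le_one (by positivity)).2 hi)

lemma dCoeff_sub {d : ℕ} (c c' : Fin (d + 1) → ℝ) : dCoeff c - dCoeff c' = dCoeff (c - c') := by
  ext i
  simp only [dCoeff, Pi.sub_apply]
  ring

lemma norm_dCoeff_le {d : ℕ} (c : Fin (d + 1) → ℝ) : ‖dCoeff c‖ ≤ ‖c‖ :=
  (pi_norm_le_iff_of_nonneg (norm_nonneg c)).2 fun i =>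
    (abs_dCoeff_le c i).trans (norm_le_pi_norm c i.succ)

lemma bnd_dCoeff_le {d : ℕ} (c : Fin (d + 1) → ℝ) : bnd (dCoeff c) ≤ bnd c := by
  rw [bnd_eq, bnd_eq]
  exact add_le_add_right (norm_dCoeff_le c) 1

lemma sum_abs_dCoeff_sub_le {d : ℕ} (c c' : Fin (d + 1) → ℝ) :
    ∑ i, |dCoeff c i - dCoeff c' i| ≤ ∑ i, |c i - c' i| := by
  rw [Fin.sum_univ_succ (fun i => |c i - c' i|)]
  refine le_add_of_nonneg_of_le (abs_nonneg _) (Finset.sum_le_sum fun i _ => ?_)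
  simpa only [← Pi.sub_apply, dCoeff_sub] using abs_dCoeff_le (c - c') i

lemma continuous_dCoeff {d : ℕ} : Continuous (dCoeff : (Fin (d + 1) → ℝ) → Fin d → ℝ) :=
  continuous_pi fun i => ((continuous_apply i.succ).mul continuous_const).div_const _

lemma Rmin_spec {a b : ℝ} (P : ℝ[X]) (h : a ≤ b) :
    Rmin a b P ∈ Icc a b ∧ IsMinOn (fun x => |P.eval x|) (Icc a b) (Rmin a b P) := by
  rw [Rmin, dif_pos h]
  exact (isCompact_Icc.exists_isMinOn (nonempty_Icc.2 h)
    (continuous_abs.comp P.continuous).continuousOn).choose_spec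

lemma isRoot_derivative_of_isMinOn_abs {P : ℝ[X]} {a b x : ℝ}
    (hmin : IsMinOn (fun y => |P.eval y|) (Icc a b) x) (hx : x ∈ Ioo a b) (hP : ¬P.IsRoot x) :
    P.derivative.IsRoot x := by
  have hloc : IsLocalMin (fun y => P.eval y * P.eval y) x := by
    filter_upwards [hmin.isLocalMin (Icc_mem_nhds hx.1 hx.2)] with y hy
    simpa only [abs_mul_abs_self] using mul_self_le_mul_self (abs_nonneg _) hy
  have h := hloc.hasDerivAt_eq_zero ((P.hasDerivAt x).mul (P.hasDerivAt x))
  exact (mul_eq_zero.1 (by linarith : P.eval x * P.derivative.eval x = 0)).resolve_left hP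

lemma Rmin_eq_or_isRoot (a b : ℝ) (P : ℝ[X]) :
    Rmin a b P = a ∨ Rmin a b P = b ∨ P.IsRoot (Rmin a b P) ∨ P.derivative.IsRoot (Rmin a b P) := by
  by_cases hab : a ≤ b
  · obtain ⟨⟨ha, hb⟩, hmin⟩ := Rmin_spec P hab
    by_cases hP : P.IsRoot (Rmin a b P)
    · exact Or.inr (Or.inr (Or.inl hP))
    rcases ha.eq_or_lt with ha | ha
    · exact Or.inl ha.symm
    rcases hb.eq_or_lt with hb | hb
    · exact Or.inr (Or.inl hb)
    exact Or.inr (Or.inr (Or.inr (isRoot_derivative_of_isMinOn_abs hmin ⟨ha, hb⟩ hP)))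
  · exact Or.inl (dif_neg hab)

/-- The zero set of the paper's `P*`, together with the points `±bnd` that stand in for `±∞`. -/
def towerPoints : (d : ℕ) → (Fin d → ℝ) → Set ℝ
  | 0, _ => ∅
  | d + 1, c => {x | (monicPoly (d + 1) c).IsRoot x} ∪ {bnd c, -bnd c} ∪ towerPoints d (dCoeff c)

lemma mem_towerPoints_of_isRoot {d : ℕ} {c : Fin d → ℝ} {x : ℝ} (hx : (monicPoly d c).IsRoot x) :
    x ∈ towerPoints d c := by
  cases d with
  | zero => simp [IsRoot, eval_monicPoly] at hx
  | succ n => exact Or.inl (Or.inl hx)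

lemma abs_le_bnd_of_mem_towerPoints :
    ∀ {d : ℕ} {c : Fin d → ℝ} {x : ℝ}, x ∈ towerPoints d c → |x| ≤ bnd c
  | d + 1, c, x, hx => by
    have hbnd : 0 ≤ bnd c := by rw [bnd_eq]; positivity
    rcases hx with (hx | hx | hx) | hx
    · exact (abs_lt_bnd_of_isRoot hx).le
    · rw [hx, abs_of_nonneg hbnd]
    · rw [Set.mem_singleton_iff.1 hx, abs_neg, abs_of_nonneg hbnd]
    · exact (abs_le_bnd_of_mem_towerPoints hx).trans (bnd_dCoeff_le c)

noncomputable def vrootBracket (n : ℕ) (c : Fin (n + 1) → ℝ) (k : ℤ) : ℝ :=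
  if k < 1 then -bnd c else if k ≤ n then vroot n k (dCoeff c) else bnd c

lemma vroot_succ {n : ℕ} {j : ℤ} (c : Fin (n + 1) → ℝ) (hj1 : 1 ≤ j) (hj : j ≤ n + 1) :
    vroot (n + 1) j c =
      Rmin (vrootBracket n c (j - 1)) (vrootBracket n c j) (monicPoly (n + 1) c) := by
  rw [vroot, vrootBracket, vrootBracket]
  congr 1 <;> split_ifs <;> first | rfl | omega

lemma vrootBracket_of_mem_Icc {n : ℕ} {k : ℤ} (c : Fin (n + 1) → ℝ) (hk1 : 1 ≤ k) (hkn : k ≤ n) :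
    vrootBracket n c k = vroot n k (dCoeff c) := by
  rw [vrootBracket, if_neg (by omega), if_pos hkn]

lemma vroot_mem_towerPoints :
    ∀ {d : ℕ} {j : ℤ} (c : Fin d → ℝ), 1 ≤ j → j ≤ d → vroot d j c ∈ towerPoints d c
  | 0, j, _, hj1, hj => by omega
  | n + 1, j, c, hj1, hj => by
    have hbracket : ∀ k, vrootBracket n c k ∈ towerPoints (n + 1) c := by
      intro k
      unfold vrootBracket
      split_ifs with _ hkn
      · exact Or.inl (Or.inr (Or.inr rfl))
      · exact Or.inr (vroot_mem_towerPoints _ (by omega) hkn)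
      · exact Or.inl (Or.inr (Or.inl rfl))
    rw [vroot_succ c hj1 (by exact_mod_cast hj)]
    rcases Rmin_eq_or_isRoot (vrootBracket n c (j - 1)) (vrootBracket n c j)
      (monicPoly (n + 1) c) with h | h | h | h
    · exact h.symm ▸ hbracket _
    · exact h.symm ▸ hbracket _
    · exact Or.inl (Or.inl h)
    · rw [derivative_monicPoly, IsRoot, eval_mul, eval_C, mul_eq_zero] at h
      exact Or.inr (mem_towerPoints_of_isRoot (h.resolve_left (by positivity)))

lemma abs_vroot_le_bnd {d : ℕ} {j : ℤ} (c : Fin d → ℝ) (hj1 : 1 ≤ j) (hj : j ≤ d) :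
    |vroot d j c| ≤ bnd c :=
  abs_le_bnd_of_mem_towerPoints (vroot_mem_towerPoints c hj1 hj)

lemma monotone_vrootBracket_of_monotoneOn {n : ℕ} {c : Fin (n + 1) → ℝ}
    (h : MonotoneOn (fun k => vroot n k (dCoeff c)) (Icc 1 n)) : Monotone (vrootBracket n c) := by
  have hbnd : ∀ k : ℤ, 1 ≤ k → k ≤ n → |vroot n k (dCoeff c)| ≤ bnd c := fun k hk1 hkn =>
    (abs_vroot_le_bnd _ hk1 hkn).trans (bnd_dCoeff_le c)
  have hpos : 0 ≤ bnd c := by rw [bnd_eq]; positivity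
  refine monotone_int_of_le_succ fun k => ?_
  unfold vrootBracket
  split_ifs
  · exact le_rfl
  · exact (abs_le.1 (hbnd _ (by omega) (by omega))).1
  · linarith
  · omega
  · exact h ⟨by omega, by omega⟩ ⟨by omega, by omega⟩ (by omega)
  · exact (abs_le.1 (hbnd _ (by omega) (by omega))).2
  · omega
  · omega
  · exact le_rfl

lemma vroot_succ_mem_Icc {n : ℕ} {j : ℤ} {c : Fin (n + 1) → ℝ} (hb : Monotone (vrootBracket n c))
    (hj1 : 1 ≤ j) (hj : j ≤ n + 1) :
    vroot (n + 1) j c ∈ Icc (vrootBracket n c (j - 1)) (vrootBracket n c j) := by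
  rw [vroot_succ c hj1 hj]
  exact (Rmin_spec _ (hb (by omega))).1

lemma monotoneOn_vroot_succ {n : ℕ} {c : Fin (n + 1) → ℝ} (hb : Monotone (vrootBracket n c)) :
    MonotoneOn (fun j => vroot (n + 1) j c) (Icc 1 (n + 1)) := by
  intro i ⟨hi1, hin⟩ j ⟨hj1, hjn⟩ hij
  rcases hij.eq_or_lt with rfl | hij
  · exact le_rfl
  calc vroot (n + 1) i c ≤ vrootBracket n c i := (vroot_succ_mem_Icc hb hi1 hin).2
    _ ≤ vrootBracket n c (j - 1) := hb (by omega)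
    _ ≤ vroot (n + 1) j c := (vroot_succ_mem_Icc hb hj1 hjn).1

lemma monotone_vrootBracket : ∀ (n : ℕ) (c : Fin (n + 1) → ℝ), Monotone (vrootBracket n c)
  | 0, _ => monotone_vrootBracket_of_monotoneOn fun _ hi _ _ _ => by simp at hi
  | n + 1, c =>
    monotone_vrootBracket_of_monotoneOn (monotoneOn_vroot_succ (monotone_vrootBracket n _))

lemma StrictMonoOn.eq_of_isMinOn_abs {f : ℝ → ℝ} {s : Set ℝ} [s.OrdConnected]
    (hf : StrictMonoOn f s) {x y : ℝ} (hx : x ∈ s) (hy : y ∈ s)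
    (hmx : IsMinOn (fun t => |f t|) s x) (hmy : IsMinOn (fun t => |f t|) s y) : x = y := by
  wlog hxy : x < y generalizing x y
  · rcases (not_lt.1 hxy).eq_or_lt with h | h
    · exact h.symm
    · exact (this hy hx hmy hmx h).symm
  have hz : (x + y) / 2 ∈ s := Set.OrdConnected.out ‹_› hx hy ⟨by linarith, by linarith⟩
  have hxz := hf hx hz (by linarith)
  have hzy := hf hz hy (by linarith)
  have hx' := isMinOn_iff.1 hmx _ hz
  have hy' := isMinOn_iff.1 hmy _ hz
  rcases le_or_gt 0 (f ((x + y) / 2)) with h | h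
  · rw [abs_of_nonneg h, abs_of_pos (by linarith)] at hy'
    linarith
  · rw [abs_of_neg h, abs_of_neg (by linarith)] at hx'
    linarith

lemma Polynomial.strictMonoOn_or_strictAntiOn_Icc {P : ℝ[X]} {a b : ℝ}
    (h : ∀ x ∈ Ioo a b, P.derivative.eval x ≠ 0) :
    StrictMonoOn (fun x => P.eval x) (Icc a b) ∨ StrictAntiOn (fun x => P.eval x) (Icc a b) := by
  have hderiv : ∀ x, deriv (fun x => P.eval x) x = P.derivative.eval x := fun x => P.deriv
  rcases hasDerivWithinAt_forall_lt_or_forall_gt_of_forall_ne (convex_Ioo a b)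
    (fun x _ => (P.hasDerivAt x).hasDerivWithinAt) h with hneg | hpos
  · refine Or.inr (strictAntiOn_of_deriv_neg (convex_Icc a b) P.continuousOn fun x hx => ?_)
    rw [interior_Icc] at hx
    exact (hderiv x).symm ▸ hneg x hx
  · refine Or.inl (strictMonoOn_of_deriv_pos (convex_Icc a b) P.continuousOn fun x hx => ?_)
    rw [interior_Icc] at hx
    exact (hderiv x).symm ▸ hpos x hx

lemma Polynomial.eq_of_isMinOn_abs_eval {P : ℝ[X]} {a b x y : ℝ}
    (h : ∀ t ∈ Ioo a b, P.derivative.eval t ≠ 0) (hx : x ∈ Icc a b) (hy : y ∈ Icc a b)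
    (hmx : IsMinOn (fun t => |P.eval t|) (Icc a b) x)
    (hmy : IsMinOn (fun t => |P.eval t|) (Icc a b) y) : x = y := by
  rcases P.strictMonoOn_or_strictAntiOn_Icc h with hP | hP
  · exact hP.eq_of_isMinOn_abs hx hy hmx hmy
  · exact hP.neg.eq_of_isMinOn_abs hx hy (by simpa using hmx) (by simpa using hmy)

lemma eq_vroot_succ_of_isMinOn {n : ℕ} {j : ℤ} {c : Fin (n + 1) → ℝ}
    (hroots : ∀ y, (monicPoly n (dCoeff c)).IsRoot y →
      ∃ k : ℤ, 1 ≤ k ∧ k ≤ n ∧ vroot n k (dCoeff c) = y)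
    (hj1 : 1 ≤ j) (hj : j ≤ n + 1) {y : ℝ}
    (hy : y ∈ Icc (vrootBracket n c (j - 1)) (vrootBracket n c j))
    (hmin : IsMinOn (fun t => |(monicPoly (n + 1) c).eval t|)
      (Icc (vrootBracket n c (j - 1)) (vrootBracket n c j)) y) :
    y = vroot (n + 1) j c := by
  have hb := monotone_vrootBracket n c
  have hderiv : ∀ t ∈ Ioo (vrootBracket n c (j - 1)) (vrootBracket n c j),
      (monicPoly (n + 1) c).derivative.eval t ≠ 0 := by
    -- every root of the derivative is a bracket point, so none lies strictly between two of them
    intro t ht h0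
    rw [derivative_monicPoly, eval_mul, eval_C, mul_eq_zero] at h0
    obtain ⟨k, hk1, hkn, rfl⟩ := hroots t (h0.resolve_left (by positivity))
    rw [← vrootBracket_of_mem_Icc c hk1 hkn] at ht
    rcases le_or_gt k (j - 1) with hk | hk
    · exact (hb hk).not_gt ht.1
    · exact (hb (by omega : j ≤ k)).not_gt ht.2
  obtain ⟨hmem, hmin'⟩ := Rmin_spec (monicPoly (n + 1) c) (hb (by omega : j - 1 ≤ j))
  rw [vroot_succ c hj1 hj]
  exact Polynomial.eq_of_isMinOn_abs_eval hderiv hy hmem hmin hmin'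

lemma exists_vroot_eq_of_isRoot :
    ∀ {d : ℕ} {c : Fin d → ℝ} {x : ℝ}, (monicPoly d c).IsRoot x →
      ∃ j : ℤ, 1 ≤ j ∧ j ≤ d ∧ vroot d j c = x
  | 0, c, x, hx => by simp [IsRoot, eval_monicPoly] at hx
  | n + 1, c, x, hx => by
    have hx' : x ∈ Ioc (vrootBracket n c (0 : ℕ)) (vrootBracket n c (n + 1 : ℕ)) := by
      have hxb := abs_lt.1 (abs_lt_bnd_of_isRoot hx)
      simp only [vrootBracket]
      rw [if_pos (by omega), if_neg (by omega), if_neg (by omega)]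
      exact ⟨hxb.1, hxb.2.le⟩
    obtain ⟨i, hi, hxi⟩ := mem_iUnion₂.1
      (Ioc_subset_biUnion_Ioc (n + 1) (fun i : ℕ => vrootBracket n c i) hx')
    rw [Finset.mem_range] at hi
    refine ⟨i + 1, by omega, by omega, (eq_vroot_succ_of_isMinOn
      (fun _ => exists_vroot_eq_of_isRoot) (by omega) (by omega) (y := x) ?_ fun t _ => ?_).symm⟩
    · simpa using And.intro hxi.1.le hxi.2
    · simp [hx.eq_zero]

lemma isMinOn_of_tendsto {X : Type*} [TopologicalSpace X] {φ : X → ℝ → ℝ}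
    (hφ : Continuous (Function.uncurry φ)) {a b g : X → ℝ} (ha : Continuous a) (hb : Continuous b)
    (hg : ∀ x, g x ∈ Icc (a x) (b x) ∧ IsMinOn (φ x) (Icc (a x) (b x)) (g x))
    {l : Filter X} [l.NeBot] {x₀ : X} (hl : l ≤ 𝓝 x₀) {y₀ : ℝ} (hy : Tendsto g l (𝓝 y₀)) :
    y₀ ∈ Icc (a x₀) (b x₀) ∧ IsMinOn (φ x₀) (Icc (a x₀) (b x₀)) y₀ := by
  have ha' : Tendsto a l (𝓝 (a x₀)) := (ha.tendsto x₀).mono_left hl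
  have hb' : Tendsto b l (𝓝 (b x₀)) := (hb.tendsto x₀).mono_left hl
  have hφ' : ∀ {z : X → ℝ} {z₀ : ℝ}, Tendsto z l (𝓝 z₀) →
      Tendsto (fun x => φ x (z x)) l (𝓝 (φ x₀ z₀)) := fun hz =>
    (hφ.tendsto (x₀, _)).comp ((tendsto_id.mono_left hl).prodMk_nhds hz)
  refine ⟨⟨le_of_tendsto_of_tendsto' ha' hy fun x => (hg x).1.1,
    le_of_tendsto_of_tendsto' hy hb' fun x => (hg x).1.2⟩, fun z hz => ?_⟩
  have hclamp : Tendsto (fun x => max (a x) (min (b x) z)) l (𝓝 z) := by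
    have h := ha'.max (hb'.min (tendsto_const_nhds (x := z)))
    rwa [min_eq_right hz.2, max_eq_right hz.1] at h
  exact le_of_tendsto_of_tendsto' (hφ' hy) (hφ' hclamp) fun x => (hg x).2
    ⟨le_max_left _ _, max_le ((hg x).1.1.trans (hg x).1.2) (min_le_left _ _)⟩

/-- A form of Berge's maximum theorem. -/
lemma continuousAt_of_isMinOn {X : Type*} [TopologicalSpace X] {φ : X → ℝ → ℝ}
    (hφ : Continuous (Function.uncurry φ)) {a b g : X → ℝ} (ha : Continuous a) (hb : Continuous b)
    (hg : ∀ x, g x ∈ Icc (a x) (b x) ∧ IsMinOn (φ x) (Icc (a x) (b x)) (g x)) {x₀ : X}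
    (huniq : ∀ y ∈ Icc (a x₀) (b x₀), IsMinOn (φ x₀) (Icc (a x₀) (b x₀)) y → y = g x₀) :
    ContinuousAt g x₀ := by
  refine (isCompact_Icc (a := a x₀ - 1) (b := b x₀ + 1)).tendsto_nhds_of_unique_mapClusterPt ?_
    fun y _ hy => ?_
  · filter_upwards [(ha.tendsto x₀).eventually (Ioi_mem_nhds (sub_one_lt (a x₀))),
      (hb.tendsto x₀).eventually (Iio_mem_nhds (lt_add_one (b x₀)))] with x hax hbx
    exact ⟨le_trans (le_of_lt hax) (hg x).1.1, (hg x).1.2.trans (le_of_lt hbx)⟩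
  · obtain ⟨U, hU, hgU⟩ := mapClusterPt_iff_ultrafilter.1 hy
    obtain ⟨hmem, hmin⟩ := isMinOn_of_tendsto hφ ha hb hg hU hgU
    exact huniq y hmem hmin

lemma continuous_eval_monicPoly {d : ℕ} :
    Continuous fun p : (Fin d → ℝ) × ℝ => (monicPoly d p.1).eval p.2 := by
  simp only [eval_monicPoly]
  fun_prop

theorem continuous_vroot : ∀ {d : ℕ} {j : ℤ}, 1 ≤ j → j ≤ d → Continuous (vroot d j)
  | 0, j, hj1, hj => by omega
  | n + 1, j, hj1, hj => by
    have hbracket : ∀ k, Continuous fun c => vrootBracket n c k := by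
      intro k
      unfold vrootBracket
      split_ifs with _ hkn
      · exact continuous_bnd.neg
      · exact (continuous_vroot (by omega) hkn).comp continuous_dCoeff
      · exact continuous_bnd
    have hj' : j ≤ n + 1 := by exact_mod_cast hj
    refine continuous_iff_continuousAt.2 fun c₀ => continuousAt_of_isMinOn
      (φ := fun c t => |(monicPoly (n + 1) c).eval t|)
      (continuous_abs.comp continuous_eval_monicPoly) (hbracket (j - 1)) (hbracket j)
      (fun c => ?_) fun y hy hmin => ?_
    · rw [vroot_succ c hj1 hj']
      exact Rmin_spec _ (monotone_vrootBracket n c (by omega))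
    · exact eq_vroot_succ_of_isMinOn (fun _ => exists_vroot_eq_of_isRoot) hj1 hj' hy hmin

lemma Polynomial.Monic.exists_mem_roots_norm_sub_lt {K : Type*} [NormedField K] [IsAlgClosed K]
    {p : K[X]} (hp : p.Monic) (x : K) {r : ℝ}
    (hr : 0 ≤ r) (h : ‖p.eval x‖ < r ^ p.natDegree) : ∃ z ∈ p.roots, ‖x - z‖ < r := by
  lift r to ℝ≥0 using hr
  by_contra! hfar
  have hsplit := IsAlgClosed.splits p
  have hprod : r ^ p.natDegree ≤ ‖p.eval x‖₊ := by
    rw [hsplit.eval_eq_prod_roots_of_monic hp, ← splits_iff_card_roots.1 hsplit,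
      ← Multiset.card_map (fun z => ‖x - z‖₊),
      show ‖(p.roots.map (x - ·)).prod‖₊ = (p.roots.map fun z => ‖x - z‖₊).prod by
        simpa [Multiset.map_map] using
          map_multiset_prod nnnormHom.toMonoidHom (p.roots.map (x - ·))]
    refine Multiset.pow_card_le_prod fun y hy => ?_
    obtain ⟨z, hz, rfl⟩ := Multiset.mem_map.1 hy
    exact hfar z hz
  exact h.not_ge (by exact_mod_cast hprod)

lemma abs_eval_monicPoly_sub_le {d : ℕ} (c c' : Fin d → ℝ) {x B : ℝ} (hB : 1 ≤ B) (hx : |x| ≤ B) :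
    |(monicPoly d c).eval x - (monicPoly d c').eval x| ≤ (∑ i, |c i - c' i|) * B ^ (d - 1) := by
  rw [eval_monicPoly, eval_monicPoly, add_sub_add_left_eq_sub, ← Finset.sum_sub_distrib,
    Finset.sum_mul]
  refine (Finset.abs_sum_le_sum_abs _ _).trans (Finset.sum_le_sum fun i _ => ?_)
  rw [← sub_mul, abs_mul, abs_pow]
  gcongr
  calc |x| ^ (i : ℕ) ≤ B ^ (i : ℕ) := pow_le_pow_left₀ (abs_nonneg x) hx _
    _ ≤ B ^ (d - 1) := pow_le_pow_right₀ hB (by omega)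

lemma exists_mem_roots_abs_sub_re_lt {d : ℕ} {c c' : Fin d → ℝ} {x B r : ℝ}
    (hx : (monicPoly d c).IsRoot x) (hB : 1 ≤ B) (hxB : |x| ≤ B) (hr : 0 ≤ r)
    (hcc' : (∑ i, |c i - c' i|) * B ^ (d - 1) < r ^ d) :
    ∃ z ∈ ((monicPoly d c').map (algebraMap ℝ ℂ)).roots, |x - z.re| < r := by
  have heval : ‖((monicPoly d c').map (algebraMap ℝ ℂ)).eval (x : ℂ)‖ <
      r ^ ((monicPoly d c').map (algebraMap ℝ ℂ)).natDegree := by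
    rw [eval_map_algebraMap, ← Complex.coe_algebraMap, aeval_algebraMap_apply,
      Complex.coe_algebraMap, Complex.norm_real, Real.norm_eq_abs, coe_aeval_eq_eval,
      (monicPoly_monic d c').natDegree_map, natDegree_monicPoly]
    calc |(monicPoly d c').eval x| = |(monicPoly d c).eval x - (monicPoly d c').eval x| := by
          rw [hx.eq_zero, zero_sub, abs_neg]
      _ ≤ (∑ i, |c i - c' i|) * B ^ (d - 1) := abs_eval_monicPoly_sub_le c c' hB hxB
      _ < r ^ d := hcc'
  obtain ⟨z, hz, hxz⟩ :=
    ((monicPoly_monic d c').map (algebraMap ℝ ℂ)).exists_mem_roots_norm_sub_lt x hr heval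
  refine ⟨z, hz, lt_of_le_of_lt ?_ hxz⟩
  simpa using Complex.abs_re_le_norm ((x : ℂ) - z)

noncomputable def rootCenters : (d : ℕ) → (Fin d → ℝ) → Finset ℝ
  | 0, _ => ∅
  | d + 1, c => ((monicPoly (d + 1) c).map (algebraMap ℝ ℂ)).roots.toFinset.image Complex.re ∪
      rootCenters d (dCoeff c)

noncomputable def boundCenters : (d : ℕ) → (Fin d → ℝ) → Finset ℝ
  | 0, _ => ∅
  | d + 1, c => {bnd c, -bnd c} ∪ boundCenters d (dCoeff c)

lemma two_mul_card_rootCenters_le :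
    ∀ {d : ℕ} (c : Fin d → ℝ), 2 * (rootCenters d c).card ≤ d * (d + 1)
  | 0, _ => by simp [rootCenters]
  | n + 1, c => by
    let P := (monicPoly (n + 1) c).map (algebraMap ℝ ℂ)
    have hlevel : (P.roots.toFinset.image Complex.re).card ≤ n + 1 := by
      refine Finset.card_image_le.trans ((Multiset.toFinset_card_le _).trans ?_)
      simpa [P, natDegree_monicPoly] using card_roots' P
    have hunion :=
      Finset.card_union_le (P.roots.toFinset.image Complex.re) (rootCenters n (dCoeff c))
    have ih := two_mul_card_rootCenters_le (dCoeff c)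
    rw [rootCenters]
    nlinarith

lemma card_boundCenters_le : ∀ {d : ℕ} (c : Fin d → ℝ), (boundCenters d c).card ≤ 2 * d
  | 0, _ => by simp [boundCenters]
  | n + 1, c => by
    rw [boundCenters]
    have := card_boundCenters_le (dCoeff c)
    have := Finset.card_le_two (a := bnd c) (b := -bnd c)
    have := Finset.card_union_le {bnd c, -bnd c} (boundCenters n (dCoeff c))
    omega

lemma towerPoints_subset_biUnion_closedBall :
    ∀ {d : ℕ} {c c' : Fin d → ℝ} {B r δ : ℝ}, 1 ≤ B → bnd c ≤ B → 0 ≤ r →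
      ∑ i, |c i - c' i| ≤ δ → (∀ m : ℕ, 1 ≤ m → m ≤ d → δ * B ^ (m - 1) < r ^ m) →
      towerPoints d c ⊆
        (⋃ z ∈ rootCenters d c', closedBall z r) ∪ ⋃ z ∈ boundCenters d c', closedBall z δ
  | 0, _, _, _, _, _, _, _, _, _, _ => by simp [towerPoints]
  | n + 1, c, c', B, r, δ, hB, hc, hr, hδ, hδr => by
    have hbnd := (abs_bnd_sub_bnd_le c c').trans hδ
    rintro x ((hx | hx | hx) | hx)
    · obtain ⟨z, hz, hxz⟩ := exists_mem_roots_abs_sub_re_lt hx hB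
        ((abs_lt_bnd_of_isRoot hx).le.trans hc) hr
        ((mul_le_mul_of_nonneg_right hδ (by positivity)).trans_lt (hδr (n + 1) le_add_self le_rfl))
      refine Or.inl (mem_iUnion₂.2 ⟨z.re, Finset.mem_union_left _ ?_, ?_⟩)
      · exact Finset.mem_image_of_mem _ (Multiset.mem_toFinset.2 hz)
      · rw [mem_closedBall, Real.dist_eq]
        exact hxz.le
    · refine Or.inr (mem_iUnion₂.2 ⟨bnd c', by simp [boundCenters], ?_⟩)
      rwa [hx, mem_closedBall, Real.dist_eq]
    · refine Or.inr (mem_iUnion₂.2 ⟨-bnd c', by simp [boundCenters], ?_⟩)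
      rwa [Set.mem_singleton_iff.1 hx, mem_closedBall, Real.dist_eq, neg_sub_neg, abs_sub_comm]
    · rcases towerPoints_subset_biUnion_closedBall hB ((bnd_dCoeff_le c).trans hc) hr
        ((sum_abs_dCoeff_sub_le c c').trans hδ) (fun m hm1 hm => hδr m hm1 (by omega)) hx with h | h
      · obtain ⟨z, hz, hxz⟩ := mem_iUnion₂.1 h
        exact Or.inl (mem_iUnion₂.2 ⟨z, Finset.mem_union_right _ hz, hxz⟩)
      · obtain ⟨z, hz, hxz⟩ := mem_iUnion₂.1 h
        exact Or.inr (mem_iUnion₂.2 ⟨z, Finset.mem_union_right _ hz, hxz⟩)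

lemma volume_biUnion_closedBall_le (s : Finset ℝ) (r : ℝ) :
    volume (⋃ z ∈ s, closedBall z r) ≤ s.card * ENNReal.ofReal (2 * r) := by
  refine (measure_biUnion_finset_le s _).trans ?_
  simp [Real.volume_closedBall]

lemma abs_sub_le_of_uIcc_subset {u v r δ : ℝ} {s t : Finset ℝ} (hr : 0 ≤ r) (hδ : 0 ≤ δ)
    (h : uIcc u v ⊆ (⋃ z ∈ s, closedBall z r) ∪ ⋃ z ∈ t, closedBall z δ) :
    |v - u| ≤ s.card * (2 * r) + t.card * (2 * δ) := by
  have hvol := (measure_mono (μ := volume) h).trans (measure_union_le _ _)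
  rw [Real.volume_interval] at hvol
  refine (ENNReal.ofReal_le_ofReal_iff (by positivity)).1 (hvol.trans ?_)
  rw [ENNReal.ofReal_add (by positivity) (by positivity), ENNReal.ofReal_mul (Nat.cast_nonneg _),
    ENNReal.ofReal_mul (Nat.cast_nonneg _), ENNReal.ofReal_natCast, ENNReal.ofReal_natCast]
  exact add_le_add (volume_biUnion_closedBall_le s r) (volume_biUnion_closedBall_le t δ)

lemma bnd_lineMap_le {d : ℕ} {c c' : Fin d → ℝ} {B t : ℝ} (hc : bnd c ≤ B) (hc' : bnd c' ≤ B)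
    (ht : t ∈ Icc (0 : ℝ) 1) : bnd (AffineMap.lineMap c c' t) ≤ B := by
  have hball := (convex_closedBall (0 : Fin d → ℝ) (B - 1)).lineMap_mem
    (mem_closedBall_zero_iff.2 (by linarith [bnd_eq c]))
    (mem_closedBall_zero_iff.2 (by linarith [bnd_eq c'])) ht
  rw [mem_closedBall_zero_iff] at hball
  linarith [bnd_eq (AffineMap.lineMap c c' t)]

lemma sum_abs_lineMap_sub_le {d : ℕ} (c c' : Fin d → ℝ) {t : ℝ} (ht : t ∈ Icc (0 : ℝ) 1) :
    ∑ i, |AffineMap.lineMap c c' t i - c i| ≤ ∑ i, |c i - c' i| := by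
  refine Finset.sum_le_sum fun i _ => ?_
  have hi : AffineMap.lineMap c c' t i - c i = t * (c' i - c i) := by
    simp only [AffineMap.lineMap_apply_module, Pi.add_apply, Pi.smul_apply, smul_eq_mul]
    ring
  rw [hi, abs_mul, abs_of_nonneg ht.1, abs_sub_comm]
  exact mul_le_of_le_one_left (abs_nonneg _) ht.2

theorem abs_vroot_sub_vroot_le {d : ℕ} {j : ℤ} (hj1 : 1 ≤ j) (hj : j ≤ d) {c c' : Fin d → ℝ}
    {B r δ : ℝ} (hc : bnd c ≤ B) (hc' : bnd c' ≤ B) (hr : 0 ≤ r) (hδ : ∑ i, |c i - c' i| ≤ δ)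
    (hδr : ∀ m : ℕ, 1 ≤ m → m ≤ d → δ * B ^ (m - 1) < r ^ m) :
    |vroot d j c - vroot d j c'| ≤ d * (d + 1) * r + 4 * d * δ := by
  have hB : 1 ≤ B := by linarith [bnd_eq c, norm_nonneg c]
  have hδ0 : 0 ≤ δ := (Finset.sum_nonneg fun i _ => abs_nonneg _).trans hδ
  have hcover : uIcc (vroot d j c) (vroot d j c') ⊆
      (⋃ z ∈ rootCenters d c, closedBall z r) ∪ ⋃ z ∈ boundCenters d c, closedBall z δ := by
    have hivt := intermediate_value_uIcc (a := (0 : ℝ)) (b := 1) ((continuous_vroot hj1 hj).comp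
      (AffineMap.lineMap_continuous (R := ℝ) (p := c) (q := c'))).continuousOn
    simp only [Function.comp_apply, AffineMap.lineMap_apply_zero,
      AffineMap.lineMap_apply_one] at hivt
    refine hivt.trans ?_
    rintro _ ⟨t, ht, rfl⟩
    rw [uIcc_of_le zero_le_one] at ht
    exact towerPoints_subset_biUnion_closedBall hB (bnd_lineMap_le hc hc' ht) hr
      ((sum_abs_lineMap_sub_le c c' ht).trans hδ) hδr (vroot_mem_towerPoints _ hj1 hj)
  have hroot : (2 * (rootCenters d c).card : ℝ) ≤ d * (d + 1) := by
    exact_mod_cast two_mul_card_rootCenters_le c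
  have hbound : ((boundCenters d c).card : ℝ) ≤ 2 * d := by
    exact_mod_cast card_boundCenters_le c
  rw [abs_sub_comm]
  refine (abs_sub_le_of_uIcc_subset hr hδ0 hcover).trans ?_
  nlinarith [mul_le_mul_of_nonneg_right hroot hr, mul_le_mul_of_nonneg_right hbound hδ0]

lemma bnd_le_of_abs_pow_le {d : ℕ} {c : Fin d → ℝ} {M : ℝ} (hM : 1 ≤ M)
    (hc : ∀ i : Fin d, |c i| ^ (d - (i : ℕ)) ≤ M) : bnd c ≤ 1 + M := by
  rw [bnd_eq]
  refine add_le_add_right ((pi_norm_le_iff_of_nonneg (by linarith)).2 fun i => ?_) 1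
  rw [Real.norm_eq_abs]
  rcases le_total |c i| 1 with h | h
  · exact h.trans hM
  · exact (le_self_pow₀ h (by omega)).trans (hc i)

lemma vroot_one_one (c : Fin 1 → ℝ) : vroot 1 1 c = -c 0 := by
  obtain ⟨j, hj1, hj, h⟩ := exists_vroot_eq_of_isRoot (c := c) (x := -c 0)
    (by simp [IsRoot, eval_monicPoly])
  obtain rfl : j = 1 := by omega
  exact h

lemma mul_pow_pred_lt_pow {d : ℕ} {B ε δ : ℝ} (hB : 0 < B) (hε0 : 0 ≤ ε) (hε1 : ε ≤ 1)
    (hδ : δ < B * ε ^ d) (m : ℕ) (hm1 : 1 ≤ m) (hmd : m ≤ d) : δ * B ^ (m - 1) < (B * ε) ^ m :=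
  calc δ * B ^ (m - 1) < B * ε ^ d * B ^ (m - 1) := by gcongr
    _ ≤ B * ε ^ m * B ^ (m - 1) := by
      have := pow_le_pow_of_le_one hε0 hε1 hmd
      gcongr
    _ = (B * ε) ^ m := by rw [mul_right_comm, mul_pow_sub_one (by omega), mul_pow]

lemma modulus_bound {D M ε δ : ℝ} (hD : 2 ≤ D) (hM : 1 ≤ M) (hε : 0 < ε) (hε2 : ε ≤ 2 / 9)
    (hδ : δ < 2 * M * ε ^ 2) :
    D * (D + 1) * (2 * M * ε) + 4 * D * δ < D * (D + 1) * (2 * D - 1) * M * ε := by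
  have hMε : 0 < M * ε := by positivity
  have hδ' : δ < 4 / 9 * (M * ε) := by nlinarith
  nlinarith [mul_le_mul_of_nonneg_left (by nlinarith : (16 / 9 : ℝ) ≤ (D + 1) * (2 * D - 3))
    (by positivity : 0 ≤ D * (M * ε))]

lemma abs_vroot_sub_vroot_lt {d : ℕ} {j : ℤ} (hd : 2 ≤ d) (hj1 : 1 ≤ j) (hj : j ≤ d) {M ε : ℝ}
    (hM : 1 ≤ M) (hε : 0 < ε) (hεM : ε ≤ 4 * M) {c c' : Fin d → ℝ} (hc : bnd c ≤ 2 * M)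
    (hc' : bnd c' ≤ 2 * M)
    (hdist : ∑ i, |c i - c' i| < 2 * M * (ε / (d * (d + 1) * (2 * d - 1) * M)) ^ d) :
    |vroot d j c - vroot d j c'| < ε := by
  have hD : (2 : ℝ) ≤ d := by exact_mod_cast hd
  have hK : (18 : ℝ) ≤ d * (d + 1) * (2 * d - 1) := by
    nlinarith [mul_le_mul (by nlinarith : (6 : ℝ) ≤ d * (d + 1))
      (by linarith : (3 : ℝ) ≤ 2 * d - 1) (by norm_num) (by positivity)]
  set ε' := ε / (d * (d + 1) * (2 * d - 1) * M) with hε'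
  have hε_eq : ε = d * (d + 1) * (2 * d - 1) * M * ε' := by
    rw [hε', mul_div_cancel₀ _ (by positivity)]
  have hε'pos : 0 < ε' := by positivity
  -- `ε ≤ 4 M` makes `ε'` small enough for `4 d δ` to fit in the slack of `modulus_bound`
  have hε'small : ε' ≤ 2 / 9 := by
    nlinarith [mul_le_mul_of_nonneg_right hK (by positivity : (0 : ℝ) ≤ M * ε')]
  refine (abs_vroot_sub_vroot_le (r := 2 * M * ε') hj1 hj hc hc' (by positivity) le_rfl
    (mul_pow_pred_lt_pow (by positivity) hε'pos.le (by linarith) hdist)).trans_lt ?_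
  rw [hε_eq]
  exact modulus_bound hD hM hε'pos hε'small (hdist.trans_le (mul_le_mul_of_nonneg_left
    (pow_le_pow_of_le_one hε'pos.le (by linarith) hd) (by positivity)))

/-- on the region `|aᵢ|^{d-i} ≤ M` (`M ≥ 1`), the virtual root
functions `ρ_{d,j}` are uniformly continuous with modulus
`ω(M,ε) = 2M (ε/(d(d+1)(2d-1)M))^d` for the `l¹` norm on coefficients. -/
theorem vroot_uniform_continuity
    (d j : ℕ) (hj1 : 1 ≤ j) (hjd : j ≤ d) (M ε : ℝ) (hM : 1 ≤ M) (hε : 0 < ε)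
    (c c' : Fin d → ℝ)
    (hc : ∀ i : Fin d, |c i| ^ (d - (i : ℕ)) ≤ M)
    (hc' : ∀ i : Fin d, |c' i| ^ (d - (i : ℕ)) ≤ M)
    (hdist : ∑ i : Fin d, |c i - c' i| <
      2 * M * (ε / (d * (d + 1) * (2 * d - 1) * M)) ^ d) :
    |vroot d (j : ℤ) c - vroot d (j : ℤ) c'| < ε := by
  have hbc := bnd_le_of_abs_pow_le hM hc
  have hbc' := bnd_le_of_abs_pow_le hM hc'
  rcases (hj1.trans hjd).eq_or_lt with rfl | hd
  · obtain rfl : j = 1 := by omega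
    rw [Nat.cast_one, vroot_one_one, vroot_one_one, neg_sub_neg, abs_sub_comm]
    convert hdist using 1
    · simp
    · field_simp
      norm_num
  by_cases hεM : 4 * M < ε
  · calc |vroot d j c - vroot d j c'| ≤ bnd c + bnd c' :=
          (abs_sub _ _).trans (add_le_add (abs_vroot_le_bnd c (by omega) (by omega))
            (abs_vroot_le_bnd c' (by omega) (by omega)))
      _ < ε := by linarith
  exact abs_vroot_sub_vroot_lt hd (by omega) (by omega) hM hε (not_lt.1 hεM) (by linarith)
    (by linarith) hdist
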